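/- Let g : ℝᵏ → ℝ ∪ {+∞} be the indicator of the hyperplane H = {z : 𝟙ᵀz = 0}. In the ADMM z-update z⁺ = argmin_z (g(z) + (ρ/2)‖z - u - p‖²) with input u + p, if u is constant across the k coordinates, say u = ū·𝟙, then z⁺ = p - p̄·𝟙 where p̄ = (𝟙ᵀp)/k; moreover the subsequent dual update u⁺ = u + p - z⁺ = (ū + p̄)·𝟙 is again constant across coordinates. Hence by induction the scaled dual variables in PMP remain constant on each link for all iterations if initialized so. -/

import Mathlib

/-!
The zero-sum hyperplane `H = {z : ∑ i, z i = 0}` is orthogonal to `𝟙`, and the shifted point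
`u + p = ū·𝟙 + p` differs from `p - p̄·𝟙 ∈ H` by a multiple of `𝟙`. Hence `p - p̄·𝟙` is the
orthogonal projection of `u + p` onto `H`: by Pythagoras, the squared distance from any other
`z ∈ H` exceeds the minimal one by `‖z - (p - p̄·𝟙)‖² > 0`.
-/

open Finset

section ZeroSumProjection

variable {ι : Type*} [Fintype ι]

theorem sum_sub_mean_eq_zero (p : ι → ℝ) :
    ∑ i, (p i - (∑ j, p j) / Fintype.card ι) = 0 := by
  have hempty : (Fintype.card ι : ℝ) = 0 → ∑ j, p j = 0 := fun h => by
    have : IsEmpty ι := Fintype.card_eq_zero_iff.mp (by exact_mod_cast h)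
    exact Finset.sum_of_isEmpty _
  rw [sum_sub_distrib, sum_const, card_univ, nsmul_eq_mul, ← mul_div_assoc,
    mul_div_cancel_left_of_imp hempty, sub_self]

/-- Pythagoras for `z - w = (z - z₀) + (z₀ - w)`, the second summand being a multiple of `𝟙`
and the first orthogonal to `𝟙`. -/
theorem sum_sq_sub_eq_add_of_sub_eq_const {z z₀ w : ι → ℝ} {c : ℝ}
    (hc : ∀ i, z₀ i - w i = c) (hz : ∑ i, z i = ∑ i, z₀ i) :
    ∑ i, (z i - w i) ^ 2 = ∑ i, (z i - z₀ i) ^ 2 + ∑ i, (z₀ i - w i) ^ 2 := by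
  have horth : ∑ i, (z i - z₀ i) = 0 := by rw [sum_sub_distrib, hz, sub_self]
  have hexpand : ∀ i, (z i - w i) ^ 2 = (z i - z₀ i) ^ 2 + 2 * c * (z i - z₀ i) + c ^ 2 := by
    intro i
    rw [← hc i]
    ring
  simp only [hexpand, hc, sum_add_distrib, ← mul_sum, horth, mul_zero, add_zero]

theorem sum_sq_sub_pos_of_ne {z z₀ : ι → ℝ} (hne : z ≠ z₀) : 0 < ∑ i, (z i - z₀ i) ^ 2 := by
  obtain ⟨i, hi⟩ := Function.ne_iff.mp hne
  exact sum_pos' (fun j _ => sq_nonneg _) ⟨i, mem_univ i, sq_pos_of_ne_zero (sub_ne_zero.mpr hi)⟩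

theorem sum_sq_sub_lt_of_sub_eq_const {z z₀ w : ι → ℝ} {c : ℝ}
    (hc : ∀ i, z₀ i - w i = c) (hz : ∑ i, z i = ∑ i, z₀ i) (hne : z ≠ z₀) :
    ∑ i, (z₀ i - w i) ^ 2 < ∑ i, (z i - w i) ^ 2 := by
  rw [sum_sq_sub_eq_add_of_sub_eq_const hc hz]
  linarith [sum_sq_sub_pos_of_ne hne]

end ZeroSumProjection

theorem pmp_z_update_uniform_dual_general (ρ : ℝ) (hρ : 0 < ρ) (k : ℕ)
    (ubar : ℝ) (p : Fin k → ℝ) :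
    let u : Fin k → ℝ := fun _ => ubar
    let pbar : ℝ := (∑ i, p i) / k
    let zp : Fin k → ℝ := fun i => p i - pbar
    (∑ i, zp i = 0) ∧
    (∀ z : Fin k → ℝ, (∑ i, z i) = 0 → z ≠ zp →
      ρ / 2 * ∑ i, (zp i - u i - p i) ^ 2 < ρ / 2 * ∑ i, (z i - u i - p i) ^ 2) ∧
    ((fun i => u i + p i - zp i) = fun _ => ubar + pbar) := by
  intro u pbar zp
  have hzp : ∑ i, zp i = 0 := by
    simpa only [Fintype.card_fin] using sum_sub_mean_eq_zero p
  refine ⟨hzp, fun z hz hne => ?_, ?_⟩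
  · have hc : ∀ i, zp i - (u i + p i) = -(ubar + pbar) := fun i => by simp only [zp, u]; ring
    simp only [sub_sub]
    exact mul_lt_mul_of_pos_left (sum_sq_sub_lt_of_sub_eq_const hc (hz.trans hzp.symm) hne)
      (half_pos hρ)
  · funext i
    simp only [u, zp]
    ring

/-- ADMM z-update for the zero-sum hyperplane with a per-link-constant dual:
if `u = ū·𝟙`, the minimizer of `(ρ/2)‖z - u - p‖²` over `{z : 𝟙ᵀz = 0}` is
`z⁺ = p - p̄·𝟙`, and the dual update `u⁺ = u + p - z⁺ = (ū + p̄)·𝟙` is again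
constant across coordinates. -/
theorem pmp_z_update_uniform_dual (ρ : ℝ) (hρ : 0 < ρ) (k : ℕ) (hk : 0 < k)
    (ubar : ℝ) (p : Fin k → ℝ) :
    let u : Fin k → ℝ := fun _ => ubar
    let pbar : ℝ := (∑ i, p i) / k
    let zp : Fin k → ℝ := fun i => p i - pbar
    (∑ i, zp i = 0) ∧
    (∀ z : Fin k → ℝ, (∑ i, z i) = 0 → z ≠ zp →
      ρ / 2 * ∑ i, (zp i - u i - p i) ^ 2 < ρ / 2 * ∑ i, (z i - u i - p i) ^ 2) ∧
    ((fun i => u i + p i - zp i) = fun _ => ubar + pbar) :=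
  pmp_z_update_uniform_dual_general ρ hρ k ubar p
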